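/- Interchange identity for rank-one shifted kernels: writing 1/(v−u) · (1 − u/z)/(1 − v/z) = 1/(v−u) − 1/(v−z), the kernel K^{(1)}_{k,ℓ}(z^{-1}) defined by the double contour integral ((−1)^{k+ℓ}/(2πi)²)∮_{|u|=ρ}du∮_{|v|=1/ρ}dv (u^ℓ/v^{k+1}) · (1/(v−u)) · ((z−u)/(z−v)) · φ_a(2n,u)/φ_a(2n,v) decomposes as K^{(1)}_{k,ℓ}(z^{-1}) = K^{(1)}_{k,ℓ}(0) + h^{(1)}_k(z^{-1}) g^{(1)}_ℓ(n), a rank-one perturbation in (k,ℓ). -/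

import Mathlib

open Complex MeasureTheory

/-- `φ_a(2n;z) = (1+az)^n (1−a/z)^{n+1}`. -/
noncomputable def phiA (a : ℝ) (n : ℕ) (z : ℂ) : ℂ :=
  (1 + (a : ℂ) * z) ^ n * (1 - (a : ℂ) / z) ^ (n + 1)

/-- `g^{(1)}_ℓ(n) = −(1/2πi)∮_{Γ_0} (−u)^ℓ φ_a(2n;u) du`, the contour a small circle
around `0` (radius `a/2`) not enclosing `a`. -/
noncomputable def gOne (a : ℝ) (n : ℕ) (ℓ : ℤ) : ℂ :=
  -(2 * Real.pi * Complex.I)⁻¹ * ∮ u in C(0, a / 2), (-u) ^ ℓ * phiA a n u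

/-- `g^{(2)}_ℓ(n) = −(1/2πi)∮_{Γ_{0,a}} (−u)^{−ℓ−2} / φ_a(2n;u) du`, the contour a circle
around `0` of radius `(1+a)/2` enclosing `0` and `a`. -/
noncomputable def gTwo (a : ℝ) (n : ℕ) (ℓ : ℤ) : ℂ :=
  -(2 * Real.pi * Complex.I)⁻¹ * ∮ u in C(0, (1 + a) / 2), (-u) ^ (-ℓ - 2) / phiA a n u

/-- The double-contour kernel `K^{(1)}_{k,ℓ}(0)`. -/
noncomputable def KOneZero (a ρ : ℝ) (n : ℕ) (k ℓ : ℤ) : ℂ :=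
  (-1 : ℂ) ^ (k + ℓ) / (2 * Real.pi * Complex.I) ^ 2 *
    ∮ u in C(0, ρ), ∮ v in C(0, ρ⁻¹),
      u ^ ℓ / v ^ (k + 1) * (v - u)⁻¹ * (phiA a n u / phiA a n v)

/-- The shifted double-contour kernel `K^{(1)}_{k,ℓ}(z⁻¹)`, with the extra factor
`(z−u)/(z−v)` in the integrand. -/
noncomputable def KOneShift (a ρ : ℝ) (n : ℕ) (z : ℂ) (k ℓ : ℤ) : ℂ :=
  (-1 : ℂ) ^ (k + ℓ) / (2 * Real.pi * Complex.I) ^ 2 *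
    ∮ u in C(0, ρ), ∮ v in C(0, ρ⁻¹),
      u ^ ℓ / v ^ (k + 1) * (v - u)⁻¹ * ((z - u) / (z - v)) * (phiA a n u / phiA a n v)

/-- `h^{(1)}_k(z⁻¹) = −(1/2πi)∮_{Γ_{0,a}} dv/(v−z) · (−v)^{−k−1}/φ_a(2n;v)`, the contour
a circle of radius `(1+a)/2` enclosing `0` and `a` but not `z`. -/
noncomputable def hOne (a : ℝ) (n : ℕ) (k : ℤ) (z : ℂ) : ℂ :=
  -(2 * Real.pi * Complex.I)⁻¹ *
    ∮ v in C(0, (1 + a) / 2), (v - z)⁻¹ * ((-v) ^ (-k - 1) / phiA a n v)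

/-! Since `(v - u)⁻¹ (z - u)/(z - v) = (v - u)⁻¹ - (v - z)⁻¹`, the shifted integrand is the
unshifted one minus a product `(u^ℓ φ_a(2n;u)) · ((v - z)⁻¹ v^{-k-1} / φ_a(2n;v))`, whose double
integral factorises. The `u`-factor is holomorphic on `ℂ ∖ {0}`, and the `v`-factor on
`a < |v| < min (1/a) |z|`; as `|z| > 1/ρ > 1`, Cauchy's theorem on annuli moves the two contours
to those defining `g^{(1)}_ℓ` and `h^{(1)}_k`. -/

open Metric

section CircleIntegral

variable {E : Type*} [NormedAddCommGroup E] [NormedSpace ℂ E]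

theorem circleIntegral_eq_of_differentiableAt {f : ℂ → E} {r R : ℝ} (hr : 0 < r) (hR : 0 < R)
    (hf : ∀ w : ℂ, ‖w‖ ∈ Set.uIcc r R → DifferentiableAt ℂ f w) :
    (∮ w in C(0, r), f w) = ∮ w in C(0, R), f w := by
  wlog hrR : r ≤ R generalizing r R
  · exact (this hR hr (fun w hw => hf w (Set.uIcc_comm r R ▸ hw)) (le_of_not_ge hrR)).symm
  have hf' : ∀ w ∈ closedBall (0 : ℂ) R \ ball 0 r, DifferentiableAt ℂ f w := fun w hw => by
    refine hf w ?_
    rw [Set.uIcc_of_le hrR]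
    simpa [not_lt, and_comm] using hw
  refine (circleIntegral_eq_of_differentiable_on_annulus_off_countable hr hrR Set.countable_empty
    (fun w hw => (hf' w hw).continuousAt.continuousWithinAt) fun w hw => hf' w ?_).symm
  exact ⟨ball_subset_closedBall hw.1.1, fun h => hw.1.2 (ball_subset_closedBall h)⟩

theorem circleIntegrable_circleIntegral {f : ℂ → ℂ → E} {c c' : ℂ} {r R : ℝ}
    (hr : 0 ≤ r) (hR : 0 ≤ R)
    (hf : ContinuousOn (Function.uncurry f) (sphere c r ×ˢ sphere c' R)) :
    CircleIntegrable (fun u => ∮ v in C(c', R), f u v) c r := by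
  refine Continuous.intervalIntegrable ?_ _ _
  refine intervalIntegral.continuous_parametric_intervalIntegral_of_continuous' ?_ _ _
  have hmaps : Continuous fun p : ℝ × ℝ => (circleMap c r p.1, circleMap c' R p.2) := by
    fun_prop
  simp only [deriv_circleMap]
  exact (((continuous_circleMap _ _).comp continuous_snd).mul continuous_const).smul
    (hf.comp_continuous hmaps fun p =>
      ⟨circleMap_mem_sphere c hr _, circleMap_mem_sphere c' hR _⟩)

end CircleIntegral

theorem inv_sub_mul_div_sub {K : Type*} [Field K] {u v z : K} (hvu : v ≠ u) (hvz : v ≠ z) :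
    (v - u)⁻¹ * ((z - u) / (z - v)) = (v - u)⁻¹ - (v - z)⁻¹ := by
  field_simp [sub_ne_zero.2 hvu, sub_ne_zero.2 hvz]
  ring

section phiA

variable {a : ℝ} {n : ℕ}

theorem phiA_ne_zero (ha : 0 < a) {v : ℂ} (h1 : a < ‖v‖) (h2 : ‖v‖ < a⁻¹) :
    phiA a n v ≠ 0 := by
  have hv : v ≠ 0 := norm_pos_iff.1 (ha.trans h1)
  refine mul_ne_zero (pow_ne_zero _ fun h => ?_) (pow_ne_zero _ fun h => ?_)
  · have hav : ‖(a : ℂ) * v‖ = 1 := by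
      rw [show (a : ℂ) * v = -1 by linear_combination h, norm_neg, norm_one]
    rw [norm_mul, Complex.norm_of_nonneg ha.le] at hav
    have := mul_lt_mul_of_pos_left h2 ha
    rw [mul_inv_cancel₀ ha.ne'] at this
    linarith
  · have hav : (a : ℂ) = v := (div_eq_one_iff_eq hv).1 (by linear_combination -h)
    rw [← hav, Complex.norm_of_nonneg ha.le] at h1
    exact h1.false

theorem differentiableAt_phiA {v : ℂ} (hv : v ≠ 0) : DifferentiableAt ℂ (phiA a n) v := by
  unfold phiA
  fun_prop (disch := exact hv)

end phiA

section Contours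

variable {a : ℝ} {n : ℕ}

theorem gOne_eq_circleIntegral (ha : 0 < a) (ℓ : ℤ) {r : ℝ} (hr : 0 < r) :
    gOne a n ℓ =
      -(2 * Real.pi * I)⁻¹ * (-1) ^ ℓ * ∮ u in C(0, r), u ^ ℓ * phiA a n u := by
  have hdiff : ∀ u : ℂ, ‖u‖ ∈ Set.uIcc (a / 2) r →
      DifferentiableAt ℂ (fun u => u ^ ℓ * phiA a n u) u := fun u hu => by
    have hu : u ≠ 0 := norm_pos_iff.1 <| lt_of_lt_of_le (lt_min (half_pos ha) hr) hu.1
    exact (differentiableAt_zpow.2 (Or.inl hu)).mul (differentiableAt_phiA hu)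
  have hintegrand :
      (fun u : ℂ => (-u) ^ ℓ * phiA a n u) = fun u => (-1) ^ ℓ * (u ^ ℓ * phiA a n u) := by
    funext u
    rw [neg_eq_neg_one_mul u, mul_zpow, mul_assoc]
  rw [gOne, hintegrand, circleIntegral.integral_const_mul,
    circleIntegral_eq_of_differentiableAt (half_pos ha) hr hdiff]
  ring

theorem hOne_eq_circleIntegral (ha : 0 < a) (ha1 : a < 1) (k : ℤ) {z : ℂ}
    (hz : (1 + a) / 2 < ‖z‖) {r : ℝ} (har : a < r) (hra : r < a⁻¹) (hrz : r < ‖z‖) :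
    hOne a n k z = (2 * Real.pi * I)⁻¹ * (-1) ^ k *
      ∮ v in C(0, r), (v - z)⁻¹ * (v ^ (-k - 1) / phiA a n v) := by
  have hmid : a < (1 + a) / 2 ∧ (1 + a) / 2 < a⁻¹ :=
    ⟨by linarith, lt_trans (by linarith) ((one_lt_inv₀ ha).2 ha1)⟩
  have hdiff : ∀ v : ℂ, ‖v‖ ∈ Set.uIcc ((1 + a) / 2) r →
      DifferentiableAt ℂ (fun v => (v - z)⁻¹ * (v ^ (-k - 1) / phiA a n v)) v := fun v hv => by
    have h1 : a < ‖v‖ := lt_of_lt_of_le (lt_min hmid.1 har) hv.1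
    have h2 : ‖v‖ < a⁻¹ := lt_of_le_of_lt hv.2 (max_lt hmid.2 hra)
    have hvz : v - z ≠ 0 := sub_ne_zero.2 fun h => (h ▸ hv.2).not_gt (max_lt hz hrz)
    have hv : v ≠ 0 := norm_pos_iff.1 (ha.trans h1)
    have := phiA_ne_zero (n := n) ha h1 h2
    have := differentiableAt_phiA (a := a) (n := n) hv
    fun_prop (disch := first | assumption | exact Or.inl hv)
  have hsign : (-1 : ℂ) ^ (-k - 1) = -(-1) ^ k := by
    rw [zpow_sub₀ (by norm_num), zpow_neg, zpow_one, div_neg, div_one, ← inv_zpow, inv_neg,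
      inv_one]
  have hintegrand : (fun v : ℂ => (v - z)⁻¹ * ((-v) ^ (-k - 1) / phiA a n v)) =
      fun v => -(-1) ^ k * ((v - z)⁻¹ * (v ^ (-k - 1) / phiA a n v)) := by
    funext v
    rw [neg_eq_neg_one_mul v, mul_zpow, hsign]
    ring
  rw [hOne, hintegrand, circleIntegral.integral_const_mul,
    circleIntegral_eq_of_differentiableAt (by linarith) (ha.trans har) hdiff]
  ring

end Contours

section Kernel

variable {a : ℝ} {n : ℕ} {k ℓ : ℤ}

theorem kernel_integrand_shift_eq_sub_mul {u v z : ℂ} (hvu : v ≠ u) (hvz : v ≠ z) :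
    u ^ ℓ / v ^ (k + 1) * (v - u)⁻¹ * ((z - u) / (z - v)) * (phiA a n u / phiA a n v) =
      u ^ ℓ / v ^ (k + 1) * (v - u)⁻¹ * (phiA a n u / phiA a n v) -
        u ^ ℓ * phiA a n u * ((v - z)⁻¹ * (v ^ (-k - 1) / phiA a n v)) := by
  rw [mul_assoc _ (v - u)⁻¹, inv_sub_mul_div_sub hvu hvz, show -k - 1 = -(k + 1) by ring,
    zpow_neg]
  ring

theorem continuousOn_kernel_integrand {r R : ℝ} (ha : 0 < a) (hr : 0 < r) (hrR : r < R)
    (haR : a < R) (hRa : R < a⁻¹) :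
    ContinuousOn (fun p : ℂ × ℂ =>
      p.1 ^ ℓ / p.2 ^ (k + 1) * (p.2 - p.1)⁻¹ * (phiA a n p.1 / phiA a n p.2))
      (sphere 0 r ×ˢ sphere 0 R) := by
  rintro ⟨u, v⟩ ⟨hu, hv⟩
  rw [mem_sphere_zero_iff_norm] at hu hv
  have hu0 : u ≠ 0 := norm_pos_iff.1 (hu ▸ hr)
  have hv0 : v ≠ 0 := norm_pos_iff.1 (hv ▸ hr.trans hrR)
  have hvu : v - u ≠ 0 := sub_ne_zero.2 fun h => hrR.ne (by rw [← hu, ← hv, h])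
  have hφv : phiA a n v ≠ 0 := phiA_ne_zero ha (hv ▸ haR) (hv ▸ hRa)
  have := (differentiableAt_phiA (a := a) (n := n) hu0).continuousAt
  have := (differentiableAt_phiA (a := a) (n := n) hv0).continuousAt
  refine ContinuousAt.continuousWithinAt ?_
  fun_prop (disch := simp [*, zpow_ne_zero])

theorem circleIntegral_circleIntegral_shift_eq_sub_mul {r R : ℝ} (ha : 0 < a) (hr : 0 < r)
    (hrR : r < R) (haR : a < R) (hRa : R < a⁻¹) {z : ℂ} (hRz : R ≠ ‖z‖) :
    (∮ u in C(0, r), ∮ v in C(0, R),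
        u ^ ℓ / v ^ (k + 1) * (v - u)⁻¹ * ((z - u) / (z - v)) * (phiA a n u / phiA a n v)) =
      (∮ u in C(0, r), ∮ v in C(0, R),
        u ^ ℓ / v ^ (k + 1) * (v - u)⁻¹ * (phiA a n u / phiA a n v)) -
      (∮ v in C(0, R), (v - z)⁻¹ * (v ^ (-k - 1) / phiA a n v)) *
        ∮ u in C(0, r), u ^ ℓ * phiA a n u := by
  set F : ℂ → ℂ → ℂ := fun u v =>
    u ^ ℓ / v ^ (k + 1) * (v - u)⁻¹ * (phiA a n u / phiA a n v)
  set G : ℂ → ℂ := fun v => (v - z)⁻¹ * (v ^ (-k - 1) / phiA a n v)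
  have hR : 0 < R := hr.trans hrR
  have hFcont : ContinuousOn (Function.uncurry F) (sphere 0 r ×ˢ sphere 0 R) :=
    continuousOn_kernel_integrand ha hr hrR haR hRa
  have hGcont : ContinuousOn G (sphere 0 R) := fun v hv => by
    rw [mem_sphere_zero_iff_norm] at hv
    have hv0 : v ≠ 0 := norm_pos_iff.1 (hv ▸ hR)
    have hvz : v - z ≠ 0 := sub_ne_zero.2 fun h => hRz (h ▸ hv.symm)
    have hφv : phiA a n v ≠ 0 := phiA_ne_zero ha (hv ▸ haR) (hv ▸ hRa)
    have := (differentiableAt_phiA (a := a) (n := n) hv0).continuousAt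
    refine ContinuousAt.continuousWithinAt ?_
    fun_prop (disch := simp [*])
  have hPcont : ContinuousOn (fun u : ℂ => u ^ ℓ * phiA a n u) (sphere 0 r) := fun u hu => by
    have hu0 : u ≠ 0 := norm_pos_iff.1 (mem_sphere_zero_iff_norm.1 hu ▸ hr)
    exact ((differentiableAt_zpow.2 (Or.inl hu0)).mul (differentiableAt_phiA hu0))
      |>.continuousAt.continuousWithinAt
  have hinner : ∀ u ∈ sphere (0 : ℂ) r, (∮ v in C(0, R),
      u ^ ℓ / v ^ (k + 1) * (v - u)⁻¹ * ((z - u) / (z - v)) * (phiA a n u / phiA a n v)) =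
      (∮ v in C(0, R), F u v) - (∮ v in C(0, R), G v) * (u ^ ℓ * phiA a n u) := fun u hu => by
    have hsplit : ∀ v ∈ sphere (0 : ℂ) R,
        u ^ ℓ / v ^ (k + 1) * (v - u)⁻¹ * ((z - u) / (z - v)) * (phiA a n u / phiA a n v) =
          F u v - (u ^ ℓ * phiA a n u) * G v := fun v hv => by
      rw [mem_sphere_zero_iff_norm] at hu hv
      exact kernel_integrand_shift_eq_sub_mul (fun h => hrR.ne (by rw [← hu, ← hv, h]))
        fun h => hRz (by rw [← hv, h])
    have hFu : CircleIntegrable (F u) 0 R :=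
      (hFcont.comp (continuousOn_const.prodMk continuousOn_id) fun v hv =>
        Set.mk_mem_prod hu hv).circleIntegrable hR.le
    have hGu : CircleIntegrable (fun v => u ^ ℓ * phiA a n u * G v) 0 R :=
      (continuousOn_const.mul hGcont).circleIntegrable hR.le
    rw [circleIntegral.integral_congr hR.le hsplit, circleIntegral.integral_sub hFu hGu,
      circleIntegral.integral_const_mul, mul_comm]
  have hcross : CircleIntegrable (fun u => (∮ v in C(0, R), G v) * (u ^ ℓ * phiA a n u)) 0 r :=
    (continuousOn_const.mul hPcont).circleIntegrable hr.le
  rw [circleIntegral.integral_congr hr.le hinner,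
    circleIntegral.integral_sub (circleIntegrable_circleIntegral hr.le hR.le hFcont) hcross,
    circleIntegral.integral_const_mul]

end Kernel

theorem KOneShift_rank_one_general (a ρ : ℝ) (ha0 : 0 < a) (haρ : a < ρ) (hρ1 : ρ < 1)
    (n : ℕ) (z : ℂ) (hz1 : ρ⁻¹ < ‖z‖)
    (k ℓ : ℤ) :
    KOneShift a ρ n z k ℓ = KOneZero a ρ n k ℓ + hOne a n k z * gOne a n ℓ := by
  have hρ0 : 0 < ρ := ha0.trans haρ
  have h1ρ : 1 < ρ⁻¹ := (one_lt_inv₀ hρ0).2 hρ1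
  have hρρ : ρ < ρ⁻¹ := hρ1.trans h1ρ
  have haρ' : a < ρ⁻¹ := haρ.trans hρρ
  have hρa : ρ⁻¹ < a⁻¹ := (inv_lt_inv₀ hρ0 ha0).2 haρ
  have hz : (1 + a) / 2 < ‖z‖ := by linarith
  unfold KOneShift KOneZero
  rw [circleIntegral_circleIntegral_shift_eq_sub_mul ha0 hρ0 hρρ haρ' hρa hz1.ne,
    hOne_eq_circleIntegral ha0 (haρ.trans hρ1) k hz haρ' hρa hz1,
    gOne_eq_circleIntegral ha0 ℓ hρ0, zpow_add₀ (by norm_num)]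
  ring

/-- Rank-one decomposition of the shifted kernel:
`K^{(1)}_{k,ℓ}(z⁻¹) = K^{(1)}_{k,ℓ}(0) + h^{(1)}_k(z⁻¹) g^{(1)}_ℓ(n)`
for `a < ρ < 1 < 1/ρ < |z| < 1/a`. -/
theorem KOneShift_rank_one (a ρ : ℝ) (ha0 : 0 < a) (haρ : a < ρ) (hρ1 : ρ < 1)
    (n : ℕ) (z : ℂ) (hz1 : ρ⁻¹ < ‖z‖) (hz2 : ‖z‖ < a⁻¹)
    (k ℓ : ℤ) :
    KOneShift a ρ n z k ℓ = KOneZero a ρ n k ℓ + hOne a n k z * gOne a n ℓ :=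
  KOneShift_rank_one_general a ρ ha0 haρ hρ1 n z hz1 k ℓ
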